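/- arXiv:2212.11781 — 5 statements merged into one kernel-verified Lean document; each statement's English description precedes it below -/
import Mathlib

section
/- Let f : ℝ^d → [0,∞) be a log-concave function and g : ℝ^d → [0,∞) any function. Suppose α₁, α₂ > 0, A₁, A₂ are invertible d×d matrices, a₁, a₂ ∈ ℝ^d, and for all x we have α₁·g(A₁⁻¹(x−a₁)) ≤ f(x) and α₂·g(A₂⁻¹(x−a₂)) ≤ f(x). Let β₁, β₂ > 0 with β₁+β₂ = 1, set α = α₁^{β₁}·α₂^{β₂}, A = β₁A₁+β₂A₂, a = β₁a₁+β₂a₂, and assume A is invertible. Then α·g(A⁻¹(x−a)) ≤ f(x) for all x ∈ ℝ^d. -/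
noncomputable section

/-- **Inner interpolation of functions** (John side). -/
theorem inner_interpolation {d : ℕ} (f g : (Fin d → ℝ) → ℝ)
    (hf0 : ∀ x, 0 ≤ f x) (hg0 : ∀ x, 0 ≤ g x)
    (hf : ∀ x y : Fin d → ℝ, ∀ t : ℝ, 0 ≤ t → t ≤ 1 →
      f x ^ t * f y ^ (1 - t) ≤ f (t • x + (1 - t) • y))
    (α₁ α₂ : ℝ) (hα₁ : 0 < α₁) (hα₂ : 0 < α₂)
    (A₁ A₂ : Matrix (Fin d) (Fin d) ℝ) (hA₁ : IsUnit A₁.det) (hA₂ : IsUnit A₂.det)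
    (a₁ a₂ : Fin d → ℝ)
    (h1 : ∀ x, α₁ * g (A₁⁻¹.mulVec (x - a₁)) ≤ f x)
    (h2 : ∀ x, α₂ * g (A₂⁻¹.mulVec (x - a₂)) ≤ f x)
    (β₁ β₂ : ℝ) (hβ₁ : 0 < β₁) (hβ₂ : 0 < β₂) (hβ : β₁ + β₂ = 1)
    (hA : IsUnit (β₁ • A₁ + β₂ • A₂).det) :
    ∀ x, (α₁ ^ β₁ * α₂ ^ β₂) *
        g ((β₁ • A₁ + β₂ • A₂)⁻¹.mulVec (x - (β₁ • a₁ + β₂ • a₂))) ≤ f x := by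
  intro x
  set A : Matrix (Fin d) (Fin d) ℝ := β₁ • A₁ + β₂ • A₂ with hAdef
  set y : Fin d → ℝ := A⁻¹.mulVec (x - (β₁ • a₁ + β₂ • a₂)) with hy
  set x₁ : Fin d → ℝ := A₁.mulVec y + a₁ with hx₁
  set x₂ : Fin d → ℝ := A₂.mulVec y + a₂ with hx₂
  have hAy : A.mulVec y = x - (β₁ • a₁ + β₂ • a₂) := by
    rw [hy, Matrix.mulVec_mulVec, Matrix.mul_nonsing_inv _ hA, Matrix.one_mulVec]
  have hxeq : β₁ • x₁ + β₂ • x₂ = x := by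
    have : β₁ • x₁ + β₂ • x₂ = A.mulVec y + (β₁ • a₁ + β₂ • a₂) := by
      rw [hx₁, hx₂, hAdef, Matrix.add_mulVec, Matrix.smul_mulVec,
        Matrix.smul_mulVec]
      module
    rw [this, hAy]; abel
  have hg1 : A₁⁻¹.mulVec (x₁ - a₁) = y := by
    rw [hx₁, add_sub_cancel_right, Matrix.mulVec_mulVec,
      Matrix.nonsing_inv_mul _ hA₁, Matrix.one_mulVec]
  have hg2 : A₂⁻¹.mulVec (x₂ - a₂) = y := by
    rw [hx₂, add_sub_cancel_right, Matrix.mulVec_mulVec,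
      Matrix.nonsing_inv_mul _ hA₂, Matrix.one_mulVec]
  have hb1 : α₁ * g y ≤ f x₁ := by have := h1 x₁; rwa [hg1] at this
  have hb2 : α₂ * g y ≤ f x₂ := by have := h2 x₂; rwa [hg2] at this
  have hβ2 : 1 - β₁ = β₂ := by linarith
  have hstep : f x₁ ^ β₁ * f x₂ ^ β₂ ≤ f x := by
    have := hf x₁ x₂ β₁ hβ₁.le (by linarith)
    rwa [hβ2, hxeq] at this
  calc (α₁ ^ β₁ * α₂ ^ β₂) * g y
      = (α₁ ^ β₁ * α₂ ^ β₂) * g y ^ (β₁ + β₂) := by rw [hβ, Real.rpow_one]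
    _ = (α₁ * g y) ^ β₁ * (α₂ * g y) ^ β₂ := by
        rw [Real.mul_rpow hα₁.le (hg0 y), Real.mul_rpow hα₂.le (hg0 y),
          Real.rpow_add_of_nonneg (hg0 y) hβ₁.le hβ₂.le]
        ring
    _ ≤ f x₁ ^ β₁ * f x₂ ^ β₂ := by
        exact mul_le_mul
          (Real.rpow_le_rpow (mul_nonneg hα₁.le (hg0 y)) hb1 hβ₁.le)
          (Real.rpow_le_rpow (mul_nonneg hα₂.le (hg0 y)) hb2 hβ₂.le)
          (Real.rpow_nonneg (mul_nonneg hα₂.le (hg0 y)) _)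
          (Real.rpow_nonneg (hf0 x₁) _)
    _ ≤ f x := hstep
end
end

section
/- Let g : ℝ^d → [0,∞) be an integrable function, A₁, A₂ positive definite d×d matrices, α₁, α₂ > 0, a₁, a₂ ∈ ℝ^d, and β₁, β₂ > 0 with β₁+β₂=1. Set α = α₁^{β₁}α₂^{β₂}, A = β₁A₁+β₂A₂, a = β₁a₁+β₂a₂. Then ∫ α·g(A⁻¹(x−a)) dx ≥ (∫ α₁·g(A₁⁻¹(x−a₁)) dx)^{β₁} · (∫ α₂·g(A₂⁻¹(x−a₂)) dx)^{β₂}. -/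
/-!
Both sides are computed by the change of variables `x = A y + a`: the integral of
`x ↦ α * g (A⁻¹ (x - a))` is `α * det A * ∫ g`. Since `β₁ + β₂ = 1`, the factor `∫ g` comes out
of the geometric mean, and the claim reduces to the multiplicative Minkowski inequality
`(det A₁) ^ β₁ * (det A₂) ^ β₂ ≤ det (β₁ A₁ + β₂ A₂)`. Writing `A₁ = Lᴴ L` and `A₂ = Lᴴ B L`
reduces that to `(det B) ^ β₂ ≤ det (β₁ + β₂ B)`, which is weighted AM–GM on each eigenvalue
of `B`.
-/

open MeasureTheory

namespace Matrix

variable {n E : Type*} [Fintype n] [DecidableEq n] [NormedAddCommGroup E] [NormedSpace ℝ E]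

lemma IsHermitian.det_cfc {A : Matrix n n ℝ} (hA : A.IsHermitian) (f : ℝ → ℝ) :
    (cfc f A).det = ∏ i, f (hA.eigenvalues i) := by
  rw [hA.cfc_eq]
  simp [IsHermitian.cfc, -Unitary.conjStarAlgAut_apply]

lemma PosDef.det_rpow_le_det_smul_one_add_smul {B : Matrix n n ℝ} (hB : B.PosDef)
    {β₁ β₂ : ℝ} (hβ₁ : 0 ≤ β₁) (hβ₂ : 0 ≤ β₂) (hβ : β₁ + β₂ = 1) :
    B.det ^ β₂ ≤ (β₁ • 1 + β₂ • B).det := by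
  -- discharges the self-adjointness side goals of the `cfc` lemmas below
  have hBsa : IsSelfAdjoint B := hB.isHermitian
  have hpos := hB.eigenvalues_pos
  have hcfc : β₁ • 1 + β₂ • B = cfc (fun t => β₁ + β₂ * t) B := by
    rw [cfc_add .., cfc_const .., cfc_const_mul .., cfc_id' ..]
    simp [Algebra.algebraMap_eq_smul_one]
  rw [hcfc, hB.isHermitian.det_cfc, hB.isHermitian.det_eq_prod_eigenvalues]
  simp only [RCLike.ofReal_real_eq_id, id]
  rw [← Real.finsetProd_rpow _ _ fun i _ => (hpos i).le]
  refine Finset.prod_le_prod (fun i _ => Real.rpow_nonneg (hpos i).le _) fun i _ => ?_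
  simpa using Real.geom_mean_le_arith_mean2_weighted hβ₁ hβ₂ zero_le_one (hpos i).le hβ

open scoped MatrixOrder in
lemma PosDef.det_rpow_mul_det_rpow_le {A₁ A₂ : Matrix n n ℝ} (hA₁ : A₁.PosDef)
    (hA₂ : A₂.PosDef) {β₁ β₂ : ℝ} (hβ₁ : 0 ≤ β₁) (hβ₂ : 0 ≤ β₂) (hβ : β₁ + β₂ = 1) :
    A₁.det ^ β₁ * A₂.det ^ β₂ ≤ (β₁ • A₁ + β₂ • A₂).det := by
  obtain ⟨L, hL, rfl⟩ :=
    CStarAlgebra.isStrictlyPositive_iff_eq_star_mul_self.mp hA₁.isStrictlyPositive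
  obtain ⟨B, hB, hA₂B⟩ : ∃ B : Matrix n n ℝ, B.PosDef ∧ A₂ = star L * B * L := by
    refine ⟨star L⁻¹ * A₂ * L⁻¹,
      (IsUnit.posDef_star_left_conjugate_iff (isUnit_nonsing_inv_iff.mpr hL)).mpr hA₂, ?_⟩
    have hLL : L⁻¹ * L = 1 := L.nonsing_inv_mul ((isUnit_iff_isUnit_det L).mp hL)
    simp only [← mul_assoc, ← star_mul, hLL, star_one, one_mul]
    rw [mul_assoc, hLL, mul_one]
  have hdet₁ : 0 < (star L * L).det := hA₁.det_pos
  have hdet₂ : A₂.det = (star L * L).det * B.det := by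
    rw [hA₂B, det_mul, det_mul, det_mul]; ring
  have hcomb : β₁ • (star L * L) + β₂ • A₂ = star L * (β₁ • 1 + β₂ • B) * L := by
    rw [hA₂B]
    noncomm_ring
  calc (star L * L).det ^ β₁ * A₂.det ^ β₂
      = (star L * L).det * B.det ^ β₂ := by
        rw [hdet₂, Real.mul_rpow hdet₁.le hB.det_pos.le, ← mul_assoc, ← Real.rpow_add hdet₁,
          hβ, Real.rpow_one]
    _ ≤ (star L * L).det * (β₁ • 1 + β₂ • B).det := by
        gcongr; exact hB.det_rpow_le_det_smul_one_add_smul hβ₁ hβ₂ hβ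
    _ = (β₁ • (star L * L) + β₂ • A₂).det := by
        rw [hcomb, det_mul, det_mul, det_mul]; ring

theorem integral_comp_mulVec (f : (n → ℝ) → E) {M : Matrix n n ℝ} (hM : M.det ≠ 0) :
    ∫ x, f (M *ᵥ x) = |M.det|⁻¹ • ∫ x, f x := by
  have hinj : Function.Injective (toLin' M) :=
    mulVec_injective_of_isUnit ((isUnit_iff_isUnit_det M).mpr hM.isUnit)
  have hemb : MeasurableEmbedding (toLin' M) :=
    (LinearMap.isClosedEmbedding_of_injective (LinearMap.ker_eq_bot.mpr hinj)).measurableEmbedding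
  simp_rw [← toLin'_apply]
  rw [← hemb.integral_map, Real.map_matrix_volume_pi_eq_smul_volume_pi hM,
    integral_smul_measure, ENNReal.toReal_ofReal (abs_nonneg _), abs_inv]

theorem integral_comp_inv_mulVec_sub (f : (n → ℝ) → E) {M : Matrix n n ℝ} (hM : M.det ≠ 0)
    (a : n → ℝ) : ∫ x, f (M⁻¹ *ᵥ (x - a)) = |M.det| • ∫ x, f x := by
  rw [integral_sub_right_eq_self (fun x => f (M⁻¹ *ᵥ x)) a, integral_comp_mulVec f,
    det_nonsing_inv, Ring.inverse_eq_inv', abs_inv, inv_inv]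
  simpa using hM

theorem PosDef.integral_comp_inv_mulVec_sub (f : (n → ℝ) → E) {M : Matrix n n ℝ} (hM : M.PosDef)
    (a : n → ℝ) : ∫ x, f (M⁻¹ *ᵥ (x - a)) = M.det • ∫ x, f x := by
  rw [Matrix.integral_comp_inv_mulVec_sub f hM.det_pos.ne', abs_of_pos hM.det_pos]

end Matrix

theorem interpolation_integral_general {d : ℕ} (g : (Fin d → ℝ) → ℝ)
    (hg0 : ∀ x, 0 ≤ g x)
    (A₁ A₂ : Matrix (Fin d) (Fin d) ℝ) (hA₁ : A₁.PosDef) (hA₂ : A₂.PosDef)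
    (α₁ α₂ : ℝ) (hα₁ : 0 < α₁) (hα₂ : 0 < α₂)
    (a₁ a₂ : Fin d → ℝ)
    (β₁ β₂ : ℝ) (hβ₁ : 0 < β₁) (hβ₂ : 0 < β₂) (hβ : β₁ + β₂ = 1) :
    (∫ x, α₁ * g (A₁⁻¹.mulVec (x - a₁))) ^ β₁ *
      (∫ x, α₂ * g (A₂⁻¹.mulVec (x - a₂))) ^ β₂ ≤
    ∫ x, (α₁ ^ β₁ * α₂ ^ β₂) *
        g ((β₁ • A₁ + β₂ • A₂)⁻¹.mulVec (x - (β₁ • a₁ + β₂ • a₂))) := by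
  have hA : (β₁ • A₁ + β₂ • A₂).PosDef := (hA₁.smul hβ₁).add (hA₂.smul hβ₂)
  simp only [integral_const_mul, hA₁.integral_comp_inv_mulVec_sub,
    hA₂.integral_comp_inv_mulVec_sub, hA.integral_comp_inv_mulVec_sub, smul_eq_mul]
  have hI : 0 ≤ ∫ x, g x := integral_nonneg hg0
  calc (α₁ * (A₁.det * ∫ x, g x)) ^ β₁ * (α₂ * (A₂.det * ∫ x, g x)) ^ β₂
      = α₁ ^ β₁ * α₂ ^ β₂ *
          (A₁.det ^ β₁ * A₂.det ^ β₂ * ((∫ x, g x) ^ β₁ * (∫ x, g x) ^ β₂)) := by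
        rw [Real.mul_rpow hα₁.le (mul_nonneg hA₁.det_pos.le hI),
          Real.mul_rpow hα₂.le (mul_nonneg hA₂.det_pos.le hI),
          Real.mul_rpow hA₁.det_pos.le hI, Real.mul_rpow hA₂.det_pos.le hI]
        ring
    _ ≤ α₁ ^ β₁ * α₂ ^ β₂ * ((β₁ • A₁ + β₂ • A₂).det * ∫ x, g x) := by
        rw [← Real.rpow_add' hI (by simp [hβ]), hβ, Real.rpow_one]
        gcongr
        exact hA₁.det_rpow_mul_det_rpow_le hA₂ hβ₁.le hβ₂.le hβ

/-- **Integral of the interpolated position** dominates the geometric mean of the integrals. -/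
theorem interpolation_integral {d : ℕ} (g : (Fin d → ℝ) → ℝ)
    (hg0 : ∀ x, 0 ≤ g x) (hgint : Integrable g)
    (A₁ A₂ : Matrix (Fin d) (Fin d) ℝ) (hA₁ : A₁.PosDef) (hA₂ : A₂.PosDef)
    (α₁ α₂ : ℝ) (hα₁ : 0 < α₁) (hα₂ : 0 < α₂)
    (a₁ a₂ : Fin d → ℝ)
    (β₁ β₂ : ℝ) (hβ₁ : 0 < β₁) (hβ₂ : 0 < β₂) (hβ : β₁ + β₂ = 1) :
    (∫ x, α₁ * g (A₁⁻¹.mulVec (x - a₁))) ^ β₁ *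
      (∫ x, α₂ * g (A₂⁻¹.mulVec (x - a₂))) ^ β₂ ≤
    ∫ x, (α₁ ^ β₁ * α₂ ^ β₂) *
        g ((β₁ • A₁ + β₂ • A₂)⁻¹.mulVec (x - (β₁ • a₁ + β₂ • a₂))) :=
  interpolation_integral_general g hg0 A₁ A₂ hA₁ hA₂ α₁ α₂ hα₁ hα₂ a₁ a₂ β₁ β₂ hβ₁ hβ₂ hβ
end

section
/- Let ψ : ℝ^d → ℝ ∪ {+∞} be a convex function, u a point with ψ(u) < ∞, f = e^{−ψ}, and fix v ∈ ℝ^d and ν ∈ ℝ. Then (v, ν) belongs to the Fréchet normal cone of the epigraph of ψ at (u, ψ(u)) if and only if (v, −ν/f(u)) belongs to the Fréchet normal cone of the lifting L_f at (u, f(u)). -/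
/-!
The map `(x, ξ) ↦ (x, e^{-ξ})` carries the epigraph of `ψ` into the lifting of `f = e^{-ψ}`, and
near `(u, f u)` its inverse `(x, y) ↦ (x, -log y)` carries the lifting back into the epigraph.
Fréchet normals pull back along any map that is differentiable at the base point and maps one set
into the other near it, by composing with the derivative; the derivatives here are
`(h, s) ↦ (h, -f(u) s)` and `(h, s) ↦ (h, -s / f(u))`, which turn `ν` into `-ν / f u` and back.
-/

noncomputable section

/-- The Fréchet normal cone of a set `A ⊆ ℝ^d × ℝ` at a point `p`. -/
def normalConePair {d : ℕ} (A : Set ((Fin d → ℝ) × ℝ)) (p : (Fin d → ℝ) × ℝ) :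
    Set ((Fin d → ℝ) × ℝ) :=
  {v | ∀ ε > (0 : ℝ), ∃ δ > (0 : ℝ), ∀ a ∈ A, ‖a - p‖ ≤ δ →
      dotProduct v.1 (a.1 - p.1) + v.2 * (a.2 - p.2) ≤ ε * ‖a - p‖}

/-- The lifting `L_f = {(x,y) : x ∈ cl(supp f), |y| ≤ f(x)}` of a function. -/
def lifting {d : ℕ} (f : (Fin d → ℝ) → ℝ) : Set ((Fin d → ℝ) × ℝ) :=
  {p | p.1 ∈ closure {x | 0 < f x} ∧ |p.2| ≤ f p.1}

open Filter Topology

section FrechetNormal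

variable {E F : Type*} [NormedAddCommGroup E] [NormedSpace ℝ E]
  [NormedAddCommGroup F] [NormedSpace ℝ F]

def IsFrechetNormal (A : Set E) (p : E) (φ : StrongDual ℝ E) : Prop :=
  ∀ ε > (0 : ℝ), ∀ᶠ a in 𝓝[A] p, φ (a - p) ≤ ε * ‖a - p‖

theorem IsFrechetNormal.comp_of_hasFDerivAt {A : Set E} {B : Set F} {p : E} {q : F}
    {φ : StrongDual ℝ F} {g : E → F} {L : E →L[ℝ] F} (hφ : IsFrechetNormal B q φ)
    (hg : HasFDerivAt g L p) (hgp : g p = q) (hAB : ∀ᶠ a in 𝓝[A] p, g a ∈ B) :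
    IsFrechetNormal A p (φ.comp L) := by
  subst hgp
  intro ε hε
  obtain ⟨C, hC, hlip⟩ := hg.isBigO_sub.exists_pos
  have hrem := ((φ.isBigO_comp _ _).trans_isLittleO hg.isLittleO).def (half_pos hε)
  have hgB : Tendsto g (𝓝[A] p) (𝓝[B] (g p)) :=
    tendsto_nhdsWithin_iff.2 ⟨hg.continuousAt.tendsto.mono_left nhdsWithin_le_nhds, hAB⟩
  filter_upwards [hgB.eventually (hφ (ε / (2 * C)) (by positivity)),
    nhdsWithin_le_nhds hlip.bound, nhdsWithin_le_nhds hrem] with a hnormal hlip hrem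
  have hincrement : φ (g a - g p) ≤ ε / 2 * ‖a - p‖ :=
    calc φ (g a - g p) ≤ ε / (2 * C) * ‖g a - g p‖ := hnormal
      _ ≤ ε / (2 * C) * (C * ‖a - p‖) := by gcongr
      _ = ε / 2 * ‖a - p‖ := by field_simp
  calc φ.comp L (a - p) = φ (g a - g p) - φ (g a - g p - L (a - p)) := by simp
    _ ≤ ε / 2 * ‖a - p‖ + ε / 2 * ‖a - p‖ := by linarith [(abs_le.1 hrem).1]
    _ = ε * ‖a - p‖ := by ring

end FrechetNormal

def pairing {d : ℕ} (w : (Fin d → ℝ) × ℝ) : StrongDual ℝ ((Fin d → ℝ) × ℝ) :=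
  (LinearMap.toContinuousLinearMap (dotProductBilin ℝ ℝ w.1)).coprod
    (ContinuousLinearMap.mul ℝ ℝ w.2)

@[simp]
theorem pairing_apply {d : ℕ} (w a : (Fin d → ℝ) × ℝ) :
    pairing w a = w.1 ⬝ᵥ a.1 + w.2 * a.2 := rfl

theorem mem_normalConePair_iff {d : ℕ} {A : Set ((Fin d → ℝ) × ℝ)} {p w : (Fin d → ℝ) × ℝ} :
    w ∈ normalConePair A p ↔ IsFrechetNormal A p (pairing w) := by
  refine forall₂_congr fun ε _ => ?_
  rw [eventually_nhdsWithin_iff, Metric.nhds_basis_closedBall.eventually_iff]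
  simp only [Metric.mem_closedBall, dist_eq_norm]
  exact exists_congr fun δ => and_congr_right fun _ => forall_congr' fun _ => Imp.swap

theorem pairing_comp_prodMap {d : ℕ} (w : (Fin d → ℝ) × ℝ) (c : ℝ) :
    (pairing w).comp ((ContinuousLinearMap.id ℝ (Fin d → ℝ)).prodMap
      (ContinuousLinearMap.toSpanSingleton ℝ c)) = pairing (w.1, w.2 * c) := by
  ext a <;> simp [mul_comm]

theorem mk_mem_lifting_iff {d : ℕ} {f : (Fin d → ℝ) → ℝ} {x : Fin d → ℝ} {y : ℝ} (hy : 0 < y) :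
    (x, y) ∈ lifting f ↔ y ≤ f x := by
  refine ⟨fun h => (le_abs_self y).trans h.2, fun h => ⟨subset_closure ?_, ?_⟩⟩
  · exact hy.trans_le h
  · rwa [abs_of_pos hy]

section Epigraph

variable {d : ℕ} {D : Set (Fin d → ℝ)} {ψ : (Fin d → ℝ) → ℝ}

theorem mk_exp_neg_mem_lifting {x : Fin d → ℝ} {ξ : ℝ} (hx : x ∈ D) (hξ : ψ x ≤ ξ) :
    (x, Real.exp (-ξ)) ∈ lifting (D.indicator fun x => Real.exp (-ψ x)) := by
  rw [mk_mem_lifting_iff (Real.exp_pos _), Set.indicator_of_mem hx]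
  exact Real.exp_le_exp.2 (neg_le_neg hξ)

theorem mem_and_le_neg_log_of_mk_mem_lifting {x : Fin d → ℝ} {y : ℝ} (hy : 0 < y)
    (h : (x, y) ∈ lifting (D.indicator fun x => Real.exp (-ψ x))) : x ∈ D ∧ ψ x ≤ -Real.log y := by
  rw [mk_mem_lifting_iff hy] at h
  have hx : x ∈ D := by
    by_contra hx
    rw [Set.indicator_of_notMem hx] at h
    exact hy.not_ge h
  rw [Set.indicator_of_mem hx, ← Real.log_le_iff_le_exp hy] at h
  exact ⟨hx, by linarith⟩

end Epigraph

/-- `ψ : ℝ^d → ℝ ∪ {+∞}` is encoded by its values on its effective domain `D`, and `f = e^{−ψ}` is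
extended by `0` outside `D`. -/
theorem normalCone_lifting_iff_epigraph_general {d : ℕ} (D : Set (Fin d → ℝ))
    (ψ : (Fin d → ℝ) → ℝ)
    (f : (Fin d → ℝ) → ℝ)
    (hf : f = D.indicator fun x => Real.exp (-ψ x))
    (u : Fin d → ℝ) (hu : u ∈ D) (v : Fin d → ℝ) (ν : ℝ) :
    (v, ν) ∈ normalConePair {p : (Fin d → ℝ) × ℝ | p.1 ∈ D ∧ ψ p.1 ≤ p.2} (u, ψ u) ↔
      (v, -ν / f u) ∈ normalConePair (lifting f) (u, f u) := by
  subst hf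
  rw [Set.indicator_of_mem hu, mem_normalConePair_iff, mem_normalConePair_iff]
  set F := Real.exp (-ψ u) with hF
  have hF0 : 0 < F := Real.exp_pos _
  constructor
  · intro h
    have hlog : HasFDerivAt (Prod.map id fun y => -Real.log y) _ (u, F) :=
      (hasFDerivAt_id u).prodMap _ (Real.hasDerivAt_log hF0.ne').neg.hasFDerivAt
    convert h.comp_of_hasFDerivAt hlog (by simp [hF]) ?_ using 1
    · rw [pairing_comp_prodMap]
      congr 2
      ring
    · filter_upwards [self_mem_nhdsWithin, nhdsWithin_le_nhds <|
        continuousAt_snd.eventually (lt_mem_nhds hF0)] with a ha hpos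
      exact mem_and_le_neg_log_of_mk_mem_lifting hpos ha
  · intro h
    have hexp : HasFDerivAt (Prod.map id fun ξ => Real.exp (-ξ)) _ (u, ψ u) :=
      (hasFDerivAt_id u).prodMap _ (hasDerivAt_neg _).exp.hasFDerivAt
    convert h.comp_of_hasFDerivAt hexp rfl ?_ using 1
    · simp [pairing_comp_prodMap, ← hF, hF0.ne']
    · exact eventually_nhdsWithin_of_forall fun _ ha => mk_exp_neg_mem_lifting ha.1 ha.2

/-- **Normal cones of the lifting of `f = e^{−ψ}` vs. normal cones of the epigraph of `ψ`.**
Here the convex function `ψ : ℝ^d → ℝ ∪ {+∞}` is encoded by a real-valued convex function on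
its effective domain `D`, and `f = e^{−ψ}` (extended by `0` outside `D`). -/
theorem normalCone_lifting_iff_epigraph {d : ℕ} (D : Set (Fin d → ℝ))
    (ψ : (Fin d → ℝ) → ℝ) (hψ : ConvexOn ℝ D ψ)
    (f : (Fin d → ℝ) → ℝ)
    (hf : f = D.indicator fun x => Real.exp (-ψ x))
    (u : Fin d → ℝ) (hu : u ∈ D) (v : Fin d → ℝ) (ν : ℝ) :
    (v, ν) ∈ normalConePair {p : (Fin d → ℝ) × ℝ | p.1 ∈ D ∧ ψ p.1 ≤ p.2} (u, ψ u) ↔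
      (v, -ν / f u) ∈ normalConePair (lifting f) (u, f u) :=
  normalCone_lifting_iff_epigraph_general D ψ f hf u hu v ν
end
end

section
/- Let g = e^{−ψ} : ℝ^d → [0,∞) be a proper log-concave function with bounded support containing the origin in its interior, and let m = min ψ. Assume ψ(0) < m + 1. Then for every u ∈ supp g and every p ∈ ∂ψ(u), one has ⟨(u, g(u)), (v, ν)⟩ > 0 for all non-zero (v, ν) in the Fréchet normal cone of the lifting L_g at (u, g(u)); equivalently, ⟨p, u⟩ > −1 for all p ∈ ∂ψ(u). -/
open MeasureTheory
noncomputable section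

/-!
Log-concavity keeps the points `(u + t (z - u), g u * (1 + t log (g z / g u)))` in the lifting for
small `t > 0`, for every `z` in the support, and `(u, g u - t)` lies there too. Hence a Fréchet
normal `(v, ν)` at `(u, g u)` has `ν ≥ 0` and `⟨v, z - u⟩ + ν g(u) log (g z / g u) ≤ 0`. The
hypothesis on `g 0` says `log (g 0 / g u) > -1`, so `z = 0` settles the case `ν > 0`; if `ν = 0`,
then `⟨v, z⟩ ≤ ⟨v, u⟩` on a neighbourhood of `0`, forcing `⟨v, u⟩ > 0`. The subgradient
inequality at `y = 0` gives `⟨p, u⟩ ≥ log (g 0 / g u) > -1` directly.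
-/

open Filter Topology

lemma pairing_nonpos_of_mem_normalConePair {d : ℕ} {A : Set ((Fin d → ℝ) × ℝ)}
    {p v w : (Fin d → ℝ) × ℝ} (hv : v ∈ normalConePair A p)
    (hw : ∀ᶠ t in 𝓝[>] (0 : ℝ), p + t • w ∈ A) :
    dotProduct v.1 w.1 + v.2 * w.2 ≤ 0 := by
  by_contra! hpos
  set c := dotProduct v.1 w.1 + v.2 * w.2
  obtain ⟨δ, hδ, hA⟩ := hv (c / (‖w‖ + 1)) (by positivity)
  obtain ⟨t, hpt, ht⟩ := (hw.and (Ioo_mem_nhdsGT (by positivity : 0 < δ / (‖w‖ + 1)))).exists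
  have hnorm : ‖p + t • w - p‖ = t * ‖w‖ := by
    rw [add_sub_cancel_left, norm_smul, Real.norm_of_nonneg ht.1.le]
  have hsmall : t * ‖w‖ ≤ δ := by
    have := (lt_div_iff₀ (by positivity)).1 ht.2
    nlinarith [norm_nonneg w]
  have key : t * c ≤ c / (‖w‖ + 1) * (t * ‖w‖) := by
    convert hA _ hpt (hnorm ▸ hsmall) using 1
    · simp [c, dotProduct_smul]; ring
    · rw [hnorm]
  rw [div_mul_eq_mul_div, le_div_iff₀ (by positivity)] at key
  nlinarith

def IsLogConcave {E : Type*} [AddCommGroup E] [Module ℝ E] (g : E → ℝ) : Prop :=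
  ∀ x y : E, ∀ t : ℝ, 0 ≤ t → t ≤ 1 → g x ^ t * g y ^ (1 - t) ≤ g (t • x + (1 - t) • y)

lemma IsLogConcave.mul_one_add_mul_log_le {E : Type*} [AddCommGroup E] [Module ℝ E]
    {g : E → ℝ} (hg : IsLogConcave g) {u z : E} (hu : 0 < g u) (hz : 0 < g z) {t : ℝ}
    (ht₀ : 0 ≤ t) (ht₁ : t ≤ 1) :
    g u * (1 + t * Real.log (g z / g u)) ≤ g (u + t • (z - u)) := by
  calc g u * (1 + t * Real.log (g z / g u))
      ≤ g u * Real.exp (t * Real.log (g z / g u)) := by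
        gcongr; linarith [Real.add_one_le_exp (t * Real.log (g z / g u))]
    _ = g z ^ t * g u ^ (1 - t) := by
        rw [mul_comm t, ← Real.rpow_def_of_pos (div_pos hz hu), Real.div_rpow hz.le hu.le,
          Real.rpow_sub hu, Real.rpow_one]
        field_simp
    _ ≤ g (u + t • (z - u)) := by
        convert hg z u t ht₀ ht₁ using 2; module

lemma mk_mem_lifting {d : ℕ} {g : (Fin d → ℝ) → ℝ} {x : Fin d → ℝ} {y : ℝ} (hy : 0 < y)
    (hyg : y ≤ g x) : (x, y) ∈ lifting g :=
  ⟨subset_closure (hy.trans_le hyg), (abs_of_pos hy).trans_le hyg⟩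

lemma lifting_normal_snd_nonneg {d : ℕ} {g : (Fin d → ℝ) → ℝ} {u v : Fin d → ℝ} {ν : ℝ}
    (hu : 0 < g u) (hvν : (v, ν) ∈ normalConePair (lifting g) (u, g u)) : 0 ≤ ν := by
  have hw : ∀ᶠ t in 𝓝[>] (0 : ℝ), (u, g u) + t • ((0, -1) : (Fin d → ℝ) × ℝ) ∈ lifting g := by
    filter_upwards [Ioo_mem_nhdsGT hu] with t ht
    simpa [← sub_eq_add_neg] using mk_mem_lifting (sub_pos.2 ht.2) (by linarith [ht.1])
  simpa using pairing_nonpos_of_mem_normalConePair hvν hw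

lemma lifting_normal_pairing_nonpos {d : ℕ} {g : (Fin d → ℝ) → ℝ} (hg : IsLogConcave g)
    {u z v : Fin d → ℝ} {ν : ℝ} (hu : 0 < g u) (hz : 0 < g z)
    (hvν : (v, ν) ∈ normalConePair (lifting g) (u, g u)) :
    dotProduct v (z - u) + ν * (g u * Real.log (g z / g u)) ≤ 0 := by
  set L := Real.log (g z / g u)
  have hw : ∀ᶠ t in 𝓝[>] (0 : ℝ), (u, g u) + t • (z - u, g u * L) ∈ lifting g := by
    filter_upwards [Ioo_mem_nhdsGT (by positivity : (0 : ℝ) < 1 / (|L| + 1))] with t ht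
    have htL : t * (|L| + 1) < 1 := (lt_div_iff₀ (by positivity)).1 ht.2
    have ht₁ : t ≤ 1 := by nlinarith [abs_nonneg L]
    have hpos : 0 < 1 + t * L := by
      nlinarith [ht.1, mul_le_mul_of_nonneg_left (neg_abs_le L) ht.1.le]
    have := hg.mul_one_add_mul_log_le hu hz ht.1.le ht₁
    simpa [mul_add, mul_left_comm t] using mk_mem_lifting (by positivity) this
  exact pairing_nonpos_of_mem_normalConePair hvν hw

lemma pos_of_dotProduct_le_of_mem_nhds {d : ℕ} {S : Set (Fin d → ℝ)} (hS : S ∈ 𝓝 0)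
    {v : Fin d → ℝ} (hv : v ≠ 0) {a : ℝ} (h : ∀ z ∈ S, dotProduct v z ≤ a) : 0 < a := by
  have hcont : Tendsto (fun c : ℝ => c • v) (𝓝[>] (0 : ℝ)) (𝓝 0) :=
    ((continuous_id.smul continuous_const).tendsto' 0 0 (zero_smul ℝ v)).mono_left
      nhdsWithin_le_nhds
  obtain ⟨c, hcS, hc⟩ := ((hcont.eventually hS).and self_mem_nhdsWithin).exists
  have hvv : 0 < dotProduct v v := by simpa using Matrix.dotProduct_star_self_pos_iff.2 hv
  calc 0 < c * dotProduct v v := mul_pos hc hvv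
    _ = dotProduct v (c • v) := by rw [dotProduct_smul, smul_eq_mul]
    _ ≤ a := h _ hcS

lemma neg_one_lt_log_div {a b : ℝ} (hb : 0 < b) (h : b < Real.exp 1 * a) :
    -1 < Real.log (a / b) := by
  have ha : 0 < a := pos_of_mul_pos_right (hb.trans h) (Real.exp_pos 1).le
  rw [← inv_div, Real.log_inv, neg_lt_neg_iff, Real.log_lt_iff_lt_exp (div_pos hb ha),
    div_lt_iff₀ ha]
  exact h

theorem starlike_of_center_near_max_general {d : ℕ} (g : (Fin d → ℝ) → ℝ)
    (hglc : ∀ x y : Fin d → ℝ, ∀ t : ℝ, 0 ≤ t → t ≤ 1 →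
      g x ^ t * g y ^ (1 - t) ≤ g (t • x + (1 - t) • y))
    (h0 : (0 : Fin d → ℝ) ∈ interior {x | 0 < g x})
    (hmin : ∀ x, g x < Real.exp 1 * g 0) :
    (∀ u : Fin d → ℝ, 0 < g u → ∀ v : Fin d → ℝ, ∀ ν : ℝ,
      (v, ν) ∈ normalConePair (lifting g) (u, g u) → (v, ν) ≠ 0 →
        0 < dotProduct v u + ν * g u) ∧
    (∀ u : Fin d → ℝ, 0 < g u → ∀ p : Fin d → ℝ,
      (∀ y, 0 < g y →
        -Real.log (g u) + dotProduct p (y - u) ≤ -Real.log (g y)) →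
      -1 < dotProduct p u) := by
  have hg0 : 0 < g 0 := interior_subset (s := {x | 0 < g x}) h0
  refine ⟨fun u hu v ν hvν hne => ?_, fun u hu p hp => ?_⟩
  · rcases (lifting_normal_snd_nonneg hu hvν).eq_or_lt with rfl | hν
    · have hv : v ≠ 0 := by rintro rfl; exact hne rfl
      have := pos_of_dotProduct_le_of_mem_nhds (mem_interior_iff_mem_nhds.1 h0) hv
        fun z hz => by simpa [dotProduct_sub] using lifting_normal_pairing_nonpos hglc hu hz hvν
      simpa using this
    · have hnormal := lifting_normal_pairing_nonpos hglc hu hg0 hvν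
      rw [zero_sub, dotProduct_neg] at hnormal
      have hlog := mul_lt_mul_of_pos_left (neg_one_lt_log_div hu (hmin u)) (mul_pos hν hu)
      linarith
  · have hsub := hp 0 hg0
    rw [zero_sub, dotProduct_neg] at hsub
    have hlog := neg_one_lt_log_div hu (hmin u)
    rw [Real.log_div hg0.ne' hu.ne'] at hlog
    linarith

/-- **If the value at the origin is close to the maximum, the support is star-like.**
Here `g = e^{−ψ}` is a proper log-concave function of bounded support, with the origin in the
interior of its support; the hypothesis `∀ x, g x < e·g 0` encodes `ψ(0) < min ψ + 1`.  Then at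
every `u ∈ supp g`, every non-zero normal `(v, ν)` of the lifting at `(u, g(u))` makes an acute
angle with `(u, g(u))`; equivalently `⟨p, u⟩ > −1` for all subgradients `p ∈ ∂ψ(u)`. -/
theorem starlike_of_center_near_max {d : ℕ} (g : (Fin d → ℝ) → ℝ)
    (hg0 : ∀ x, 0 ≤ g x) (hgusc : UpperSemicontinuous g)
    (hglc : ∀ x y : Fin d → ℝ, ∀ t : ℝ, 0 ≤ t → t ≤ 1 →
      g x ^ t * g y ^ (1 - t) ≤ g (t • x + (1 - t) • y))
    (hgint : Integrable g) (hgpos : 0 < ∫ x, g x)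
    (hgsupp : Bornology.IsBounded {x | 0 < g x})
    (h0 : (0 : Fin d → ℝ) ∈ interior {x | 0 < g x})
    (hmin : ∀ x, g x < Real.exp 1 * g 0) :
    (∀ u : Fin d → ℝ, 0 < g u → ∀ v : Fin d → ℝ, ∀ ν : ℝ,
      (v, ν) ∈ normalConePair (lifting g) (u, g u) → (v, ν) ≠ 0 →
        0 < dotProduct v u + ν * g u) ∧
    (∀ u : Fin d → ℝ, 0 < g u → ∀ p : Fin d → ℝ,
      (∀ y, 0 < g y →
        -Real.log (g u) + dotProduct p (y - u) ≤ -Real.log (g y)) →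
      -1 < dotProduct p u) :=
  starlike_of_center_near_max_general g hglc h0 hmin
end
end

section
/- Let f = e^{−ψ} : ℝ^d → [0,∞) be an upper semi-continuous log-concave function whose support contains the origin in its interior, let u ∈ supp f, and let (v, ν) with ν ≠ 0 be given. Then the following are equivalent: (1) (v, ν) belongs to the Fréchet normal cone of the lifting L_f at (u, f(u)) and ⟨(u, f(u)), (v, ν)⟩ = 1; (2) there exists p ∈ ∂ψ(u) with 1 + ⟨p, u⟩ > 0 such that (v, ν) = (p, 1/f(u)) / (1 + ⟨p, u⟩). -/
noncomputable section

/-!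
A normal `(v, ν)` with `ν > 0` is tested against the points `(u + t (y - u), f(u) e^{t L})`,
`L = ln f(y) - ln f(u)`, which lie in the lifting by log-concavity; dividing the normal-cone
inequality by `t → 0⁺` gives `⟨v, y - u⟩ + ν f(u) L ≤ 0`, i.e. `v / (ν f(u)) ∈ ∂ψ(u)`.
Conversely, a subgradient `p` gives `f(x) ≤ f(u) e^{-⟨p, x - u⟩}`, and then the pairing of the
proposed normal with `(x, y) - (u, f(u))` is at most `(e^{-s} - 1 + s) / (1 + ⟨p, u⟩)` with
`s = ⟨p, x - u⟩`, which is quadratically small.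
-/

open Real Set

theorem abs_dotProduct_le_sum_abs_mul_norm {d : ℕ} (p w : Fin d → ℝ) :
    |p ⬝ᵥ w| ≤ (∑ i, |p i|) * ‖w‖ := by
  rw [Finset.sum_mul, dotProduct]
  refine (Finset.abs_sum_le_sum_abs _ _).trans (Finset.sum_le_sum fun i _ => ?_)
  rw [abs_mul]
  exact mul_le_mul_of_nonneg_left (norm_le_pi_norm w i) (abs_nonneg _)

section NormalCone

variable {d : ℕ} {A : Set ((Fin d → ℝ) × ℝ)} {p w : (Fin d → ℝ) × ℝ}

theorem mem_normalConePair_of_le_sq {δ₀ C : ℝ} (hδ₀ : 0 < δ₀)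
    (h : ∀ a ∈ A, ‖a - p‖ ≤ δ₀ →
      w.1 ⬝ᵥ (a.1 - p.1) + w.2 * (a.2 - p.2) ≤ C * ‖a - p‖ ^ 2) :
    w ∈ normalConePair A p := by
  intro ε hε
  refine ⟨min δ₀ (ε / (|C| + 1)), lt_min hδ₀ (by positivity), fun a ha hap => ?_⟩
  have hC : |C| * ‖a - p‖ ≤ ε :=
    calc |C| * ‖a - p‖ ≤ (|C| + 1) * (ε / (|C| + 1)) := by
          gcongr
          · linarith
          · exact hap.trans (min_le_right _ _)
      _ = ε := by field_simp
  calc _ ≤ C * ‖a - p‖ ^ 2 := h a ha (hap.trans (min_le_left _ _))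
    _ ≤ |C| * ‖a - p‖ * ‖a - p‖ := by rw [sq, ← mul_assoc]; gcongr; exact le_abs_self C
    _ ≤ ε * ‖a - p‖ := by gcongr

theorem nonpos_of_mem_normalConePair (hw : w ∈ normalConePair A p)
    {γ : ℝ → (Fin d → ℝ) × ℝ} {t₀ K S : ℝ} (ht₀ : 0 < t₀)
    (hA : ∀ t ∈ Ioc 0 t₀, γ t ∈ A) (hK : ∀ t ∈ Ioc 0 t₀, ‖γ t - p‖ ≤ K * t)
    (hS : ∀ t ∈ Ioc 0 t₀, t * S ≤ w.1 ⬝ᵥ ((γ t).1 - p.1) + w.2 * ((γ t).2 - p.2)) :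
    S ≤ 0 := by
  by_contra! hS₀
  obtain ⟨δ, hδ, H⟩ := hw (S / (|K| + 1)) (by positivity)
  set t := min t₀ (δ / (|K| + 1))
  have ht : t ∈ Ioc 0 t₀ := ⟨lt_min ht₀ (by positivity), min_le_left _ _⟩
  have hnorm : ‖γ t - p‖ ≤ |K| * t :=
    (hK t ht).trans (mul_le_mul_of_nonneg_right (le_abs_self K) ht.1.le)
  have hδt : |K| * t ≤ δ :=
    calc |K| * t ≤ (|K| + 1) * (δ / (|K| + 1)) := by
          gcongr
          · linarith
          · exact min_le_right _ _
      _ = δ := by field_simp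
  have hKt : S / (|K| + 1) * (|K| * t) < t * S := by
    rw [div_mul_eq_mul_div, div_lt_iff₀ (by positivity)]
    nlinarith [ht.1]
  have := H _ (hA t ht) (hnorm.trans hδt)
  nlinarith [hS t ht, mul_le_mul_of_nonneg_left hnorm (by positivity : 0 ≤ S / (|K| + 1))]

end NormalCone

theorem le_mul_exp_of_subgradient {α : Type*} {f g : α → ℝ} {u : α} (hf₀ : ∀ x, 0 ≤ f x)
    (hu : 0 < f u) (hsub : ∀ y, 0 < f y → -log (f u) + g y ≤ -log (f y)) (x : α) :
    f x ≤ f u * exp (-g x) := by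
  rcases (hf₀ x).eq_or_lt with hx | hx
  · rw [← hx]; positivity
  calc f x = exp (log (f x)) := (exp_log hx).symm
    _ ≤ exp (log (f u) + -g x) := exp_le_exp.mpr (by linarith [hsub x hx])
    _ = f u * exp (-g x) := by rw [exp_add, exp_log hu]

theorem mul_exp_le_of_logConcave {E : Type*} [AddCommGroup E] [Module ℝ E] {f : E → ℝ}
    {u y : E} (hflc : ∀ x y : E, ∀ t : ℝ, 0 ≤ t → t ≤ 1 →
      f x ^ t * f y ^ (1 - t) ≤ f (t • x + (1 - t) • y))
    (hu : 0 < f u) (hy : 0 < f y) {t : ℝ} (ht₀ : 0 ≤ t) (ht₁ : t ≤ 1) :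
    f u * exp (t * (log (f y) - log (f u))) ≤ f (u + t • (y - u)) := by
  have h := hflc y u t ht₀ ht₁
  rw [rpow_def_of_pos hy, rpow_def_of_pos hu, ← exp_add,
    show t • y + (1 - t) • u = u + t • (y - u) by module] at h
  calc f u * exp (t * (log (f y) - log (f u)))
      = exp (log (f y) * t + log (f u) * (1 - t)) := by
        rw [← exp_log hu, ← exp_add, log_exp]; ring_nf
    _ ≤ _ := h

section Lifting

variable {d : ℕ} {f : (Fin d → ℝ) → ℝ} {u v : Fin d → ℝ} {ν : ℝ}

theorem nonneg_of_mem_normalConePair_lifting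
    (hw : (v, ν) ∈ normalConePair (lifting f) (u, f u)) (hu : 0 < f u) : 0 ≤ ν := by
  have key : -(ν * f u) ≤ 0 := by
    refine nonpos_of_mem_normalConePair hw (γ := fun t => (u, (1 - t) * f u)) (K := f u)
      one_pos (fun t ht => ⟨subset_closure hu, ?_⟩) (fun t ht => ?_) (fun t ht => ?_)
    · rw [abs_of_nonneg (by nlinarith [ht.2])]; nlinarith [ht.1]
    · rw [Prod.norm_def]
      simp only [Prod.fst_sub, Prod.snd_sub, sub_self, norm_zero]
      rw [show (1 - t) * f u - f u = -(f u * t) by ring, norm_neg, norm_of_nonneg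
        (by nlinarith [ht.1])]
      exact max_le (by nlinarith [ht.1]) le_rfl
    · simp only [sub_self, dotProduct_zero, zero_add]
      exact le_of_eq (by ring)
  exact nonneg_of_mul_nonneg_left (neg_nonpos.mp key) hu

theorem subgradient_le_of_mem_normalConePair_lifting
    (hflc : ∀ x y : Fin d → ℝ, ∀ t : ℝ, 0 ≤ t → t ≤ 1 →
      f x ^ t * f y ^ (1 - t) ≤ f (t • x + (1 - t) • y))
    (hw : (v, ν) ∈ normalConePair (lifting f) (u, f u)) (hu : 0 < f u) (hν : 0 ≤ ν)
    {y : Fin d → ℝ} (hy : 0 < f y) :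
    v ⬝ᵥ (y - u) + ν * f u * (log (f y) - log (f u)) ≤ 0 := by
  set L := log (f y) - log (f u)
  have ht₀ : (0 : ℝ) < 1 / (|L| + 1) := by positivity
  have hsmall : ∀ t ∈ Ioc (0 : ℝ) (1 / (|L| + 1)), t ≤ 1 ∧ t * |L| ≤ 1 := fun t ht => by
    have h := ht.2
    rw [le_div_iff₀ (by positivity)] at h
    constructor <;> nlinarith [abs_nonneg L, ht.1]
  refine nonpos_of_mem_normalConePair hw (γ := fun t => (u + t • (y - u), f u * exp (t * L)))
    (K := ‖y - u‖ + 2 * f u * |L|) ht₀ (fun t ht => ?_) (fun t ht => ?_) (fun t ht => ?_)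
  · have hle := mul_exp_le_of_logConcave hflc hu hy ht.1.le (hsmall t ht).1
    exact ⟨subset_closure (lt_of_lt_of_le (by positivity) hle),
      (abs_of_pos (by positivity)).trans_le hle⟩
  · have hexp : |exp (t * L) - 1| ≤ 2 * (t * |L|) := by
      have h := abs_exp_sub_one_le (x := t * L)
        (by rw [abs_mul, abs_of_pos ht.1]; exact (hsmall t ht).2)
      rwa [abs_mul, abs_of_pos ht.1] at h
    rw [Prod.norm_def]
    simp only [Prod.fst_sub, Prod.snd_sub, add_sub_cancel_left, norm_smul, norm_of_nonneg ht.1.le,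
      show f u * exp (t * L) - f u = f u * (exp (t * L) - 1) by ring, norm_mul,
      norm_of_nonneg hu.le, Real.norm_eq_abs]
    apply max_le
    · nlinarith [mul_nonneg ht.1.le (by positivity : 0 ≤ 2 * f u * |L|)]
    · nlinarith [mul_le_mul_of_nonneg_left hexp hu.le, norm_nonneg (y - u), ht.1]
  · simp only [add_sub_cancel_left, dotProduct_smul, smul_eq_mul]
    nlinarith [add_one_le_exp (t * L), mul_nonneg hν hu.le]

theorem mem_normalConePair_lifting_of_subgradient (hf₀ : ∀ x, 0 ≤ f x) (hu : 0 < f u)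
    {p : Fin d → ℝ} (hsub : ∀ y, 0 < f y → -log (f u) + p ⬝ᵥ (y - u) ≤ -log (f y))
    (hc : 0 < 1 + p ⬝ᵥ u) :
    ((1 + p ⬝ᵥ u)⁻¹ • p, ((1 + p ⬝ᵥ u) * f u)⁻¹) ∈ normalConePair (lifting f) (u, f u) := by
  set c := 1 + p ⬝ᵥ u
  set C := ∑ i, |p i|
  have hC : 0 ≤ C := Finset.sum_nonneg fun i _ => abs_nonneg _
  refine mem_normalConePair_of_le_sq (δ₀ := 1 / (C + 1)) (C := c⁻¹ * C ^ 2) (by positivity) ?_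
  rintro ⟨x, y⟩ ⟨-, hyx⟩ hnear
  set s := p ⬝ᵥ (x - u)
  have hxu : ‖x - u‖ ≤ ‖((x, y) : (Fin d → ℝ) × ℝ) - (u, f u)‖ :=
    norm_fst_le (((x, y) : (Fin d → ℝ) × ℝ) - (u, f u))
  have hs : |s| ≤ C * ‖x - u‖ := abs_dotProduct_le_sum_abs_mul_norm p (x - u)
  have hs₁ : |s| ≤ 1 := by
    have := hxu.trans hnear
    rw [le_div_iff₀ (by positivity)] at this
    nlinarith [norm_nonneg (x - u)]
  have hy : y ≤ f u * exp (-s) :=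
    (le_abs_self y).trans (hyx.trans (le_mul_exp_of_subgradient hf₀ hu hsub x))
  have hquad : exp (-s) - 1 + s ≤ s ^ 2 := by
    have := abs_exp_sub_one_sub_id_le (x := -s) (by rwa [abs_neg])
    rw [neg_sq] at this
    linarith [(abs_le.mp this).2]
  have hsq : s ^ 2 ≤ C ^ 2 * ‖((x, y) : (Fin d → ℝ) × ℝ) - (u, f u)‖ ^ 2 := by
    rw [← sq_abs, ← mul_pow]
    exact pow_le_pow_left₀ (abs_nonneg s) (hs.trans (by gcongr)) 2
  calc c⁻¹ • p ⬝ᵥ (x - u) + (c * f u)⁻¹ * (y - f u)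
      ≤ c⁻¹ * s + (c * f u)⁻¹ * (f u * exp (-s) - f u) := by
        rw [smul_dotProduct, smul_eq_mul]; gcongr
    _ = c⁻¹ * (exp (-s) - 1 + s) := by field_simp; ring
    _ ≤ c⁻¹ * C ^ 2 * ‖((x, y) : (Fin d → ℝ) × ℝ) - (u, f u)‖ ^ 2 := by
        rw [mul_assoc]; gcongr; exact hquad.trans hsq

end Lifting

theorem nonhorizontal_normals_via_subgradients_general {d : ℕ} (f : (Fin d → ℝ) → ℝ)
    (hf0 : ∀ x, 0 ≤ f x)
    (hflc : ∀ x y : Fin d → ℝ, ∀ t : ℝ, 0 ≤ t → t ≤ 1 →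
      f x ^ t * f y ^ (1 - t) ≤ f (t • x + (1 - t) • y))
    (u : Fin d → ℝ) (hu : 0 < f u) (v : Fin d → ℝ) (ν : ℝ) (hν : ν ≠ 0) :
    ((v, ν) ∈ normalConePair (lifting f) (u, f u) ∧
        dotProduct u v + f u * ν = 1) ↔
      ∃ p : Fin d → ℝ,
        (∀ y, 0 < f y →
          -Real.log (f u) + dotProduct p (y - u) ≤ -Real.log (f y)) ∧
        0 < 1 + dotProduct p u ∧
        v = (1 + dotProduct p u)⁻¹ • p ∧
        ν = ((1 + dotProduct p u) * f u)⁻¹ := by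
  constructor
  · rintro ⟨hw, hunit⟩
    have hν₀ : 0 < ν := (nonneg_of_mem_normalConePair_lifting hw hu).lt_of_ne' hν
    have hc : 1 + (ν * f u)⁻¹ • v ⬝ᵥ u = (ν * f u)⁻¹ := by
      rw [smul_dotProduct, smul_eq_mul, dotProduct_comm]
      field_simp
      linarith
    refine ⟨(ν * f u)⁻¹ • v, fun y hy => ?_, by rw [hc]; positivity, ?_, ?_⟩
    · have hS := subgradient_le_of_mem_normalConePair_lifting hflc hw hu hν₀.le hy
      have hdiv : (ν * f u)⁻¹ * v ⬝ᵥ (y - u) ≤ -(log (f y) - log (f u)) := by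
        rw [inv_mul_le_iff₀ (by positivity)]
        linarith
      rw [smul_dotProduct, smul_eq_mul]
      linarith
    · rw [hc, inv_inv, smul_smul, mul_inv_cancel₀ (by positivity), one_smul]
    · rw [hc, mul_inv, inv_inv, mul_inv_cancel_right₀ hu.ne']
  · rintro ⟨p, hsub, hc, rfl, rfl⟩
    refine ⟨mem_normalConePair_lifting_of_subgradient hf0 hu hsub hc, ?_⟩
    rw [dotProduct_smul, smul_eq_mul, dotProduct_comm u p]
    field_simp
    ring

/-- **Non-horizontal normals of the lifting via subgradients.**  For an upper semi-continuous
log-concave `f = e^{−ψ}` with the origin interior to its support, `u ∈ supp f` and `ν ≠ 0`: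
`(v, ν)` is a normal of the lifting at `(u, f(u))` with `⟨(u,f(u)),(v,ν)⟩ = 1` iff
`(v, ν) = (p, 1/f(u)) / (1 + ⟨p,u⟩)` for some subgradient `p ∈ ∂ψ(u)` with `1 + ⟨p,u⟩ > 0`. -/
theorem nonhorizontal_normals_via_subgradients {d : ℕ} (f : (Fin d → ℝ) → ℝ)
    (hf0 : ∀ x, 0 ≤ f x) (hfusc : UpperSemicontinuous f)
    (hflc : ∀ x y : Fin d → ℝ, ∀ t : ℝ, 0 ≤ t → t ≤ 1 →
      f x ^ t * f y ^ (1 - t) ≤ f (t • x + (1 - t) • y))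
    (h0 : (0 : Fin d → ℝ) ∈ interior {x | 0 < f x})
    (u : Fin d → ℝ) (hu : 0 < f u) (v : Fin d → ℝ) (ν : ℝ) (hν : ν ≠ 0) :
    ((v, ν) ∈ normalConePair (lifting f) (u, f u) ∧
        dotProduct u v + f u * ν = 1) ↔
      ∃ p : Fin d → ℝ,
        (∀ y, 0 < f y →
          -Real.log (f u) + dotProduct p (y - u) ≤ -Real.log (f y)) ∧
        0 < 1 + dotProduct p u ∧
        v = (1 + dotProduct p u)⁻¹ • p ∧
        ν = ((1 + dotProduct p u) * f u)⁻¹ :=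
  nonhorizontal_normals_via_subgradients_general f hf0 hflc u hu v ν hν
end
end
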